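/- Logarithmic modulus bound for the derivative of the branching mechanism. Assume condition (H1) holds with exponent γ > 0. Then there exists a constant c₁ > 0 such that for all λ ∈ (0,1): 0 ≤ 1 + ψ′(λ) = 2βλ + ∫_0^∞ y(1 − e^{−λy}) n(dy) ≤ c₁ (log(1/λ))^{−(2+γ)}. -/

import Mathlib

open MeasureTheory Set Filter Topology

noncomputable def psi (β : ℝ) (n : Measure ℝ) (l : ℝ) : ℝ :=
  -l + β * l ^ 2 + ∫ y in Ioi (0 : ℝ), (Real.exp (-l * y) - 1 + l * y) ∂n

/-! `ψ` is differentiated under the integral sign, with domination by `(l + 1) * min (y ^ 2) y`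
for `0 < x < l + 1`. For the bound, split the integral of `y * (1 - exp (-l * y))` at
`A = l ^ (-1/2)`: below `A` the integrand is at most `l * y ^ 2 ≤ √l * min (y ^ 2) y`; above `A`
it is at most `y ≤ y * (log y / log A) ^ p`, with `p = 2 + γ` and `log A = log (1 / l) / 2`, so
(H1) controls the tail. Finally `√l = exp (-log (1 / l) / 2)` is `O(log (1 / l) ^ (-p))`. -/

open Real

lemma log_rpow_le_mul_sqrt {x p : ℝ} (hx : 1 ≤ x) (hp : 0 < p) :
    log x ^ p ≤ (2 * p) ^ p * √x := by
  have hx0 : 0 ≤ x := zero_le_one.trans hx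
  have hlog : log x ≤ 2 * p * x ^ (1 / (2 * p)) := by
    have h := log_le_rpow_div hx0 (by positivity : 0 < 1 / (2 * p))
    rwa [div_div_eq_mul_div, div_one, mul_comm] at h
  calc log x ^ p ≤ (2 * p * x ^ (1 / (2 * p))) ^ p :=
        rpow_le_rpow (log_nonneg hx) hlog hp.le
    _ = (2 * p) ^ p * √x := by
        rw [mul_rpow (by positivity) (by positivity), ← rpow_mul hx0, sqrt_eq_rpow]
        field_simp

lemma sqrt_le_mul_log_inv_rpow_neg {l p : ℝ} (hl0 : 0 < l) (hl1 : l < 1) (hp : 0 < p) :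
    √l ≤ (2 * p) ^ p * log (1 / l) ^ (-p) := by
  have hL : 0 < log (1 / l) := log_pos (by rw [lt_div_iff₀ hl0]; linarith)
  have h := log_rpow_le_mul_sqrt (x := 1 / l) (by rw [le_div_iff₀ hl0]; linarith) hp
  rw [sqrt_div' _ hl0.le, sqrt_one, mul_one_div, le_div_iff₀ (sqrt_pos.2 hl0)] at h
  rw [rpow_neg hL.le, ← div_eq_mul_inv, le_div_iff₀ (rpow_pos_of_pos hL p)]
  linarith

lemma exp_neg_sub_one_add_nonneg (t : ℝ) : 0 ≤ exp (-t) - 1 + t := by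
  linarith [one_sub_le_exp_neg t]

lemma exp_neg_sub_one_add_le_mul_one_sub_exp_neg (t : ℝ) :
    exp (-t) - 1 + t ≤ t * (1 - exp (-t)) := by
  have h : (1 + t) * exp (-t) ≤ 1 := by
    calc (1 + t) * exp (-t) ≤ exp t * exp (-t) := by gcongr; linarith [add_one_le_exp t]
      _ = 1 := by rw [← exp_add, add_neg_cancel, exp_zero]
  nlinarith

lemma mul_one_sub_exp_neg_mul_nonneg {x y : ℝ} (hx : 0 ≤ x) (hy : 0 ≤ y) :
    0 ≤ y * (1 - exp (-x * y)) :=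
  mul_nonneg hy (sub_nonneg.2 (exp_le_one_iff.2 (by nlinarith)))

lemma mul_one_sub_exp_neg_mul_le_min {x y : ℝ} (hy : 0 ≤ y) :
    y * (1 - exp (-x * y)) ≤ min (x * y ^ 2) y := by
  have h₁ : 1 - exp (-x * y) ≤ x * y := by
    rw [neg_mul]; linarith [one_sub_le_exp_neg (x * y)]
  have h₂ : 1 - exp (-x * y) ≤ 1 := by linarith [exp_pos (-x * y)]
  refine le_min ?_ ?_
  · nlinarith [mul_le_mul_of_nonneg_left h₁ hy]
  · nlinarith [mul_le_mul_of_nonneg_left h₂ hy]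

lemma mul_one_sub_exp_neg_mul_le_mul_min {x y c : ℝ} (hy : 0 ≤ y) (hxc : x ≤ c)
    (hc : 1 ≤ c) :
    y * (1 - exp (-x * y)) ≤ c * min (y ^ 2) y := by
  rw [mul_min_of_nonneg _ _ (zero_le_one.trans hc)]
  exact (mul_one_sub_exp_neg_mul_le_min hy).trans
    (min_le_min (mul_le_mul_of_nonneg_right hxc (sq_nonneg y)) (le_mul_of_one_le_left hy hc))

lemma sq_le_mul_min {y A : ℝ} (hy : 0 ≤ y) (hyA : y ≤ A) (hA : 1 ≤ A) :
    y ^ 2 ≤ A * min (y ^ 2) y := by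
  rcases le_total y 1 with hy1 | hy1
  · rw [min_eq_left (by nlinarith)]
    exact le_mul_of_one_le_left (sq_nonneg y) hA
  · rw [min_eq_right (by nlinarith), sq]
    exact mul_le_mul_of_nonneg_right hyA hy

lemma hasDerivAt_exp_neg_mul_sub_one_add_mul (x y : ℝ) :
    HasDerivAt (fun x => exp (-x * y) - 1 + x * y) (y * (1 - exp (-x * y))) x := by
  have h₁ : HasDerivAt (fun x => -x * y) (-y) x := by simpa using (hasDerivAt_neg x).mul_const y
  have h₂ : HasDerivAt (fun x => x * y) y x := by simpa using hasDerivAt_mul_const y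
  exact ((h₁.exp.sub_const 1).add h₂).congr_deriv (by ring)

lemma mul_log_rpow_nonneg {y : ℝ} (p : ℝ) (hy : 1 ≤ y) : 0 ≤ y * log y ^ p :=
  mul_nonneg (zero_le_one.trans hy) (rpow_nonneg (log_nonneg hy) _)

lemma integrableOn_of_lintegral_ofReal_lt_top {α : Type*} [MeasurableSpace α] {μ : Measure α}
    {f : α → ℝ} {s : Set α} (hs : MeasurableSet s) (hf : Measurable f)
    (hf0 : ∀ x ∈ s, 0 ≤ f x) (h : ∫⁻ x in s, ENNReal.ofReal (f x) ∂μ < ⊤) :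
    IntegrableOn f s μ :=
  ⟨hf.aestronglyMeasurable,
    (hasFiniteIntegral_iff_ofReal (ae_restrict_of_forall_mem hs hf0)).2 h⟩

section BranchingMechanism

variable {n : Measure ℝ}

theorem hasDerivAt_integral_exp_neg_mul_sub_one_add_mul
    (hn : IntegrableOn (fun y => min (y ^ 2) y) (Ioi 0) n) {l : ℝ} (hl : 0 < l) :
    HasDerivAt (fun x => ∫ y in Ioi (0 : ℝ), (exp (-x * y) - 1 + x * y) ∂n)
      (∫ y in Ioi (0 : ℝ), y * (1 - exp (-l * y)) ∂n) l := by
  have hbound : ∀ x ∈ Ioo 0 (l + 1), ∀ y ∈ Ioi (0 : ℝ),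
      y * (1 - exp (-x * y)) ≤ (l + 1) * min (y ^ 2) y := fun x hx y hy =>
    mul_one_sub_exp_neg_mul_le_mul_min (le_of_lt hy) hx.2.le (by linarith [hx.1])
  refine (hasDerivAt_integral_of_dominated_loc_of_deriv_le (Ioo_mem_nhds hl (lt_add_one l))
    (Eventually.of_forall fun x => (by fun_prop : Continuous _).aestronglyMeasurable) ?_
    (by fun_prop : Continuous _).aestronglyMeasurable ?_ (hn.const_mul (l + 1))
    (ae_of_all _ fun y x _ => hasDerivAt_exp_neg_mul_sub_one_add_mul x y)).2
  · refine (hn.const_mul (l * (l + 1))).mono' (by fun_prop : Continuous _).aestronglyMeasurable ?_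
    filter_upwards [ae_restrict_mem measurableSet_Ioi] with y hy
    have hly : 0 ≤ l * y := mul_nonneg hl.le (le_of_lt hy)
    rw [norm_of_nonneg (by simpa [neg_mul] using exp_neg_sub_one_add_nonneg (l * y)), mul_assoc]
    calc exp (-l * y) - 1 + l * y ≤ l * (y * (1 - exp (-l * y))) := by
          simpa [neg_mul, mul_assoc] using exp_neg_sub_one_add_le_mul_one_sub_exp_neg (l * y)
      _ ≤ l * ((l + 1) * min (y ^ 2) y) :=
          mul_le_mul_of_nonneg_left (hbound l ⟨hl, by linarith⟩ y hy) hl.le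
  · filter_upwards [ae_restrict_mem measurableSet_Ioi] with y hy x hx
    rw [norm_of_nonneg (mul_one_sub_exp_neg_mul_nonneg hx.1.le (le_of_lt hy))]
    exact hbound x hx y hy

theorem hasDerivAt_psi (β : ℝ) (hn : IntegrableOn (fun y => min (y ^ 2) y) (Ioi 0) n)
    {l : ℝ} (hl : 0 < l) :
    HasDerivAt (psi β n)
      (-1 + (2 * β * l + ∫ y in Ioi (0 : ℝ), y * (1 - exp (-l * y)) ∂n)) l := by
  have hpoly : HasDerivAt (fun x : ℝ => -x + β * x ^ 2) (-1 + 2 * β * l) l :=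
    ((hasDerivAt_id' l).neg.add ((hasDerivAt_pow 2 l).const_mul β)).congr_deriv
      (by norm_num; ring)
  exact (hpoly.add (hasDerivAt_integral_exp_neg_mul_sub_one_add_mul hn hl)).congr_deriv (by ring)

theorem integral_mul_one_sub_exp_neg_mul_nonneg {l : ℝ} (hl : 0 ≤ l) :
    0 ≤ ∫ y in Ioi (0 : ℝ), y * (1 - exp (-l * y)) ∂n :=
  setIntegral_nonneg measurableSet_Ioi fun _ hy => mul_one_sub_exp_neg_mul_nonneg hl (le_of_lt hy)

lemma mul_one_sub_exp_neg_mul_le_add_indicator {l A p y : ℝ} (hl : 0 ≤ l) (hA : 1 < A)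
    (hp : 0 ≤ p) (hy : 0 ≤ y) :
    y * (1 - exp (-l * y)) ≤
      l * A * min (y ^ 2) y + log A ^ (-p) * (Ioi 1).indicator (fun y => y * log y ^ p) y := by
  have hlogA : 0 < log A := log_pos hA
  rcases le_or_gt y A with hyA | hyA
  · have htail : 0 ≤ log A ^ (-p) * (Ioi 1).indicator (fun y => y * log y ^ p) y :=
      mul_nonneg (rpow_nonneg hlogA.le _)
        (indicator_nonneg (fun z hz => mul_log_rpow_nonneg p (le_of_lt hz)) y)
    calc y * (1 - exp (-l * y)) ≤ l * y ^ 2 :=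
          (mul_one_sub_exp_neg_mul_le_min hy).trans (min_le_left _ _)
      _ ≤ l * A * min (y ^ 2) y := by
          rw [mul_assoc]; exact mul_le_mul_of_nonneg_left (sq_le_mul_min hy hyA hA.le) hl
      _ ≤ _ := le_add_of_nonneg_right htail
  · have hy1 : 1 < y := hA.trans hyA
    have hone : 1 ≤ log A ^ (-p) * log y ^ p := by
      rw [rpow_neg hlogA.le, ← div_eq_inv_mul, one_le_div (rpow_pos_of_pos hlogA p)]
      exact rpow_le_rpow hlogA.le (log_le_log (by linarith) hyA.le) hp
    rw [indicator_of_mem (mem_Ioi.2 hy1)]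
    calc y * (1 - exp (-l * y)) ≤ y :=
          (mul_one_sub_exp_neg_mul_le_min hy).trans (min_le_right _ _)
      _ ≤ log A ^ (-p) * (y * log y ^ p) := by nlinarith
      _ ≤ _ := le_add_of_nonneg_left (by positivity)

theorem integral_mul_one_sub_exp_neg_mul_le {l A p : ℝ}
    (hn : IntegrableOn (fun y => min (y ^ 2) y) (Ioi 0) n)
    (hlog : IntegrableOn (fun y => y * log y ^ p) (Ioi 1) n) (hl : 0 ≤ l) (hA : 1 < A)
    (hp : 0 ≤ p) :
    ∫ y in Ioi (0 : ℝ), y * (1 - exp (-l * y)) ∂n ≤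
      l * A * ∫ y in Ioi (0 : ℝ), min (y ^ 2) y ∂n +
        log A ^ (-p) * ∫ y in Ioi (1 : ℝ), y * log y ^ p ∂n := by
  have htail : Integrable (fun y => (Ioi 1).indicator (fun y => y * log y ^ p) y)
      (n.restrict (Ioi 0)) :=
    (hlog.integrable_indicator measurableSet_Ioi).restrict
  calc ∫ y in Ioi (0 : ℝ), y * (1 - exp (-l * y)) ∂n
      ≤ ∫ y in Ioi (0 : ℝ), (l * A * min (y ^ 2) y +
          log A ^ (-p) * (Ioi 1).indicator (fun y => y * log y ^ p) y) ∂n :=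
        integral_mono_of_nonneg
          (ae_restrict_of_forall_mem measurableSet_Ioi fun y hy =>
            mul_one_sub_exp_neg_mul_nonneg hl (le_of_lt hy))
          ((hn.const_mul _).add (htail.const_mul _))
          (ae_restrict_of_forall_mem measurableSet_Ioi fun y hy =>
            mul_one_sub_exp_neg_mul_le_add_indicator hl hA hp (le_of_lt hy))
    _ = _ := by
        rw [integral_add (hn.const_mul _) (htail.const_mul _), integral_const_mul,
          integral_const_mul, integral_indicator measurableSet_Ioi,
          Measure.restrict_restrict measurableSet_Ioi,
          inter_eq_self_of_subset_left (Ioi_subset_Ioi zero_le_one)]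

theorem integral_mul_one_sub_exp_neg_mul_le_sqrt {l p : ℝ}
    (hn : IntegrableOn (fun y => min (y ^ 2) y) (Ioi 0) n)
    (hlog : IntegrableOn (fun y => y * log y ^ p) (Ioi 1) n) (hl0 : 0 < l) (hl1 : l < 1)
    (hp : 0 ≤ p) :
    ∫ y in Ioi (0 : ℝ), y * (1 - exp (-l * y)) ∂n ≤
      √l * ∫ y in Ioi (0 : ℝ), min (y ^ 2) y ∂n +
        2 ^ p * log (1 / l) ^ (-p) * ∫ y in Ioi (1 : ℝ), y * log y ^ p ∂n := by
  have hA : 1 < √(1 / l) := by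
    rw [lt_sqrt zero_le_one, one_pow, lt_div_iff₀ hl0]; linarith
  have hlA : l * √(1 / l) = √l := by
    rw [sqrt_div' _ hl0.le, sqrt_one, mul_one_div, div_sqrt]
  have hlogA : log √(1 / l) ^ (-p) = 2 ^ p * log (1 / l) ^ (-p) := by
    have hL : 0 ≤ log (1 / l) := log_nonneg (by rw [le_div_iff₀ hl0]; linarith)
    rw [log_sqrt (by positivity), div_rpow hL zero_le_two, rpow_neg zero_le_two, div_inv_eq_mul,
      mul_comm]
  simpa only [hlA, hlogA] using integral_mul_one_sub_exp_neg_mul_le hn hlog hl0.le hA hp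

theorem two_mul_mul_add_integral_mul_one_sub_exp_neg_mul_le {β l p : ℝ} (hβ : 0 ≤ β)
    (hn : IntegrableOn (fun y => min (y ^ 2) y) (Ioi 0) n)
    (hlog : IntegrableOn (fun y => y * log y ^ p) (Ioi 1) n) (hl0 : 0 < l) (hl1 : l < 1)
    (hp : 0 < p) :
    2 * β * l + ∫ y in Ioi (0 : ℝ), y * (1 - exp (-l * y)) ∂n ≤
      ((2 * β + ∫ y in Ioi (0 : ℝ), min (y ^ 2) y ∂n) * (2 * p) ^ p +
        2 ^ p * ∫ y in Ioi (1 : ℝ), y * log y ^ p ∂n) * log (1 / l) ^ (-p) := by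
  have hCmin : 0 ≤ ∫ y in Ioi (0 : ℝ), min (y ^ 2) y ∂n :=
    setIntegral_nonneg measurableSet_Ioi fun y hy => le_min (sq_nonneg y) (le_of_lt hy)
  have hsqrt := sqrt_le_mul_log_inv_rpow_neg hl0 hl1 hp
  have hβl : 2 * β * l ≤ 2 * β * √l := by
    gcongr
    exact le_sqrt_of_sq_le (by nlinarith)
  calc 2 * β * l + ∫ y in Ioi (0 : ℝ), y * (1 - exp (-l * y)) ∂n
      ≤ (2 * β + ∫ y in Ioi (0 : ℝ), min (y ^ 2) y ∂n) * √l +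
          2 ^ p * log (1 / l) ^ (-p) * ∫ y in Ioi (1 : ℝ), y * log y ^ p ∂n := by
        linarith [integral_mul_one_sub_exp_neg_mul_le_sqrt hn hlog hl0 hl1 hp.le]
    _ ≤ (2 * β + ∫ y in Ioi (0 : ℝ), min (y ^ 2) y ∂n) *
            ((2 * p) ^ p * log (1 / l) ^ (-p)) +
          2 ^ p * log (1 / l) ^ (-p) * ∫ y in Ioi (1 : ℝ), y * log y ^ p ∂n := by gcongr
    _ = _ := by ring

end BranchingMechanism

theorem psi_deriv_log_bound
    (β : ℝ) (hβ : 0 ≤ β) (n : Measure ℝ)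
    (hn : ∫⁻ y in Ioi (0 : ℝ), ENNReal.ofReal (min (y ^ 2) y) ∂n < ⊤)
    (γ : ℝ) (hγ : 0 < γ)
    (hH1 : ∫⁻ y in Ioi (1 : ℝ), ENNReal.ofReal (y * Real.log y ^ (2 + γ)) ∂n < ⊤) :
    ∃ c₁ : ℝ, 0 < c₁ ∧ ∀ l : ℝ, 0 < l → l < 1 →
      HasDerivAt (psi β n)
        (-1 + (2 * β * l + ∫ y in Ioi (0 : ℝ), y * (1 - Real.exp (-l * y)) ∂n)) l ∧
      0 ≤ 2 * β * l + ∫ y in Ioi (0 : ℝ), y * (1 - Real.exp (-l * y)) ∂n ∧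
      2 * β * l + (∫ y in Ioi (0 : ℝ), y * (1 - Real.exp (-l * y)) ∂n)
        ≤ c₁ * Real.log (1 / l) ^ (-(2 + γ)) := by
  set p := 2 + γ
  have hp : 0 < p := by positivity
  have hmin : IntegrableOn (fun y => min (y ^ 2) y) (Ioi 0) n :=
    integrableOn_of_lintegral_ofReal_lt_top measurableSet_Ioi (by fun_prop)
      (fun y hy => le_min (sq_nonneg y) (le_of_lt hy)) hn
  have hlog : IntegrableOn (fun y => y * log y ^ p) (Ioi 1) n :=
    integrableOn_of_lintegral_ofReal_lt_top measurableSet_Ioi (by fun_prop)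
      (fun y hy => mul_log_rpow_nonneg p (le_of_lt hy)) hH1
  have hCmin : 0 ≤ ∫ y in Ioi (0 : ℝ), min (y ^ 2) y ∂n :=
    setIntegral_nonneg measurableSet_Ioi fun y hy => le_min (sq_nonneg y) (le_of_lt hy)
  have hClog : 0 ≤ ∫ y in Ioi (1 : ℝ), y * log y ^ p ∂n :=
    setIntegral_nonneg measurableSet_Ioi fun y hy => mul_log_rpow_nonneg p (le_of_lt hy)
  refine ⟨(2 * β + ∫ y in Ioi (0 : ℝ), min (y ^ 2) y ∂n) * (2 * p) ^ p +
      2 ^ p * (∫ y in Ioi (1 : ℝ), y * log y ^ p ∂n) + 1, by positivity, fun l hl0 hl1 =>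
    ⟨hasDerivAt_psi β hmin hl0,
      add_nonneg (by positivity) (integral_mul_one_sub_exp_neg_mul_nonneg hl0.le), ?_⟩⟩
  have hL : 0 ≤ log (1 / l) ^ (-p) :=
    rpow_nonneg (log_nonneg (by rw [le_div_iff₀ hl0]; linarith)) _
  exact (two_mul_mul_add_integral_mul_one_sub_exp_neg_mul_le hβ hmin hlog hl0 hl1 hp).trans
    (mul_le_mul_of_nonneg_right (le_add_of_nonneg_right zero_le_one) hL)
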